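/- For any real α > 1 and β > 0, the quantity log_α((β+1)(α−1)+1) − 1 is strictly decreasing in α; in particular, making the ratio α = γ̌ĥ/ȟ larger (e.g., by allowing longer D2D links) strictly decreases the D2D per-channel capacity bound. -/
import Mathlib


open Real Set

lemma coreG (c : ℝ) (hc : 1 < c) {x : ℝ} (hx : 0 < x) :
    c * ((1 + x) * Real.log (1 + x)) < (1 + c * x) * Real.log (1 + c * x) := by
  have hc0 : (0:ℝ) < c := lt_trans one_pos hc
  set G : ℝ → ℝ := fun t =>
    (1 + c * t) * Real.log (1 + c * t) - c * ((1 + t) * Real.log (1 + t)) with hG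
  have key : StrictMonoOn G (Set.Ici 0) := by
    apply strictMonoOn_of_deriv_pos (convex_Ici 0)
    · apply ContinuousOn.sub
      · apply ContinuousOn.mul (by fun_prop)
        apply ContinuousOn.log (by fun_prop)
        intro t ht
        have h0 : (0:ℝ) ≤ t := ht
        nlinarith
      · apply ContinuousOn.mul continuousOn_const
        apply ContinuousOn.mul (by fun_prop)
        apply ContinuousOn.log (by fun_prop)
        intro t ht
        have h0 : (0:ℝ) ≤ t := ht
        nlinarith
    · intro t ht
      rw [interior_Ici] at ht
      have ht0 : (0:ℝ) < t := ht
      have h1 : (0:ℝ) < 1 + c * t := by nlinarith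
      have h2 : (0:ℝ) < 1 + t := by linarith
      have d1 : HasDerivAt (fun t : ℝ => 1 + c * t) c t := by
        simpa using ((hasDerivAt_id t).const_mul c).const_add 1
      have d2 : HasDerivAt (fun t : ℝ => 1 + t) 1 t := by
        simpa using (hasDerivAt_id t).const_add 1
      have dl1 : HasDerivAt (fun t : ℝ => Real.log (1 + c * t)) (c / (1 + c * t)) t :=
        d1.log h1.ne'
      have dl2 : HasDerivAt (fun t : ℝ => Real.log (1 + t)) (1 / (1 + t)) t :=
        d2.log h2.ne'
      have dG : HasDerivAt G
          ((c * Real.log (1 + c * t) + (1 + c * t) * (c / (1 + c * t))) -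
            c * (1 * Real.log (1 + t) + (1 + t) * (1 / (1 + t)))) t :=
        (d1.mul dl1).sub ((d2.mul dl2).const_mul c)
      rw [dG.deriv]
      have e1 : (1 + c * t) * (c / (1 + c * t)) = c := by field_simp
      have e2 : (1 + t) * (1 / (1 + t)) = 1 := by field_simp
      rw [e1, e2]
      have hlog : Real.log (1 + t) < Real.log (1 + c * t) := by
        apply Real.log_lt_log h2
        nlinarith
      nlinarith
  have h0 : G 0 = 0 := by simp [hG]
  have hGx : G 0 < G x := key Set.self_mem_Ici (Set.mem_Ici.mpr hx.le) hx
  rw [h0] at hGx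
  have : (0:ℝ) < (1 + c * x) * Real.log (1 + c * x) - c * ((1 + x) * Real.log (1 + x)) := hGx
  linarith

/-- For β > 0, the D2D per-channel capacity bound
N(α) = log_α((β+1)(α−1)+1) − 1 is strictly decreasing in α on (1, ∞),
assuming (β+1)(α−1)+1 > α on that range. -/
theorem stmt16 (β : ℝ) (hβ : 0 < β)
    (hdom : ∀ α : ℝ, 1 < α → α < (β + 1) * (α - 1) + 1) :
    StrictAntiOn
      (fun α : ℝ => Real.log ((β + 1) * (α - 1) + 1) / Real.log α - 1)
      (Set.Ioi 1) := by
  have hc : (1:ℝ) < β + 1 := by linarith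
  have hc0 : (0:ℝ) < β + 1 := by linarith
  apply strictAntiOn_of_deriv_neg (convex_Ioi 1)
  · apply ContinuousOn.sub _ continuousOn_const
    apply ContinuousOn.div
    · apply ContinuousOn.log (by fun_prop)
      intro α hα
      have hα1 : (1:ℝ) < α := hα
      nlinarith
    · exact Real.continuousOn_log.mono (fun α hα => by
        have : (1:ℝ) < α := hα
        simp only [Set.mem_compl_iff, Set.mem_singleton_iff]
        linarith)
    · intro α hα
      have hα1 : (1:ℝ) < α := hα
      exact ne_of_gt (Real.log_pos hα1)
  · intro α hα
    rw [interior_Ioi] at hα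
    have hα1 : (1:ℝ) < α := hα
    have hα0 : (0:ℝ) < α := by linarith
    have hg : (0:ℝ) < (β + 1) * (α - 1) + 1 := by nlinarith
    have hlogα : (0:ℝ) < Real.log α := Real.log_pos hα1
    have d1 : HasDerivAt (fun α : ℝ => (β + 1) * (α - 1) + 1) (β + 1) α := by
      simpa using (((hasDerivAt_id α).sub_const 1).const_mul (β + 1)).add_const 1
    have dlg : HasDerivAt (fun α : ℝ => Real.log ((β + 1) * (α - 1) + 1))
        ((β + 1) / ((β + 1) * (α - 1) + 1)) α := d1.log hg.ne'
    have dla : HasDerivAt Real.log α⁻¹ α := Real.hasDerivAt_log hα0.ne'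
    have ddiv : HasDerivAt
        (fun α : ℝ => Real.log ((β + 1) * (α - 1) + 1) / Real.log α)
        (((β + 1) / ((β + 1) * (α - 1) + 1) * Real.log α -
          Real.log ((β + 1) * (α - 1) + 1) * α⁻¹) / (Real.log α) ^ 2) α :=
      dlg.div dla hlogα.ne'
    have dF : HasDerivAt
        (fun α : ℝ => Real.log ((β + 1) * (α - 1) + 1) / Real.log α - 1)
        (((β + 1) / ((β + 1) * (α - 1) + 1) * Real.log α -
          Real.log ((β + 1) * (α - 1) + 1) * α⁻¹) / (Real.log α) ^ 2) α :=
      ddiv.sub_const 1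
    rw [dF.deriv]
    apply div_neg_of_neg_of_pos _ (by positivity)
    rw [sub_neg]
    have key := coreG (β + 1) hc (show (0:ℝ) < α - 1 by linarith)
    have e1 : (1:ℝ) + (α - 1) = α := by ring
    have e2 : (1:ℝ) + (β + 1) * (α - 1) = (β + 1) * (α - 1) + 1 := by ring
    rw [e1, e2] at key
    -- key : (β+1) * (α * log α) < ((β+1)*(α-1)+1) * log ((β+1)*(α-1)+1)
    rw [div_mul_eq_mul_div, ← div_eq_mul_inv, div_lt_div_iff₀ hg hα0]
    nlinarith [key]
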